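/- arXiv:1403.4904 — 4 statements merged into one kernel-verified Lean document; each statement's English description precedes it below -/
import Mathlib

section
/- For an impulsive dynamical system on a compact metric space, the first impulsive time function τ₁ is lower semicontinuous on X \ D. -/
open Set Filter Topology MeasureTheory Function
open scoped NNReal ENNReal

/-! If `a < τ₁(x)` and `x ∉ D`, the trajectory of `x` avoids the closed set `D` on the compact
interval `[0, a]`. By the tube lemma, so do the trajectories of all points near `x`, and then
`τ₁ ≥ a` near `x`. -/

/-- A semiflow on `X`: `φ 0 = id` and `φ (t+s) = φ t ∘ φ s`. -/
def IsSemiflow {X : Type*} (φ : ℝ≥0 → X → X) : Prop :=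
  (∀ x, φ 0 x = x) ∧ ∀ (s t : ℝ≥0) (x : X), φ (t + s) x = φ t (φ s x)

/-- `x` is non-wandering for `φ`: every neighborhood `U` of `x` and every `T > 0`
admit `t ≥ T` with `φ t ⁻¹' U ∩ U ≠ ∅`. -/
def NonWandering {X : Type*} [TopologicalSpace X] (φ : ℝ≥0 → X → X) (x : X) : Prop :=
  ∀ U ∈ nhds x, ∀ T : ℝ≥0, 0 < T → ∃ t : ℝ≥0, T ≤ t ∧ (φ t ⁻¹' U ∩ U).Nonempty

/-- The non-wandering set of `φ`. -/
def NonWanderingSet {X : Type*} [TopologicalSpace X] (φ : ℝ≥0 → X → X) : Set X :=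
  {x | NonWandering φ x}

/-- The first impulsive time `τ₁(x)`: the infimum of positive times at which the base
semiflow trajectory of `x` hits `D` (equal to `∞` if it never does). -/
noncomputable def ImpulsiveTau {X : Type*} (φb : ℝ≥0 → X → X) (D : Set X) (x : X) : ℝ≥0∞ :=
  sInf ((fun t : ℝ≥0 => (t : ℝ≥0∞)) '' {t : ℝ≥0 | 0 < t ∧ φb t x ∈ D})

/-- `φ` is the impulsive semiflow of the impulsive dynamical system `(X, φb, D, I)`:
it is a semiflow which follows `φb` strictly before the first impulsive time, and jumps
via `I` at the first impulsive time.  (Together with the semigroup property this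
determines the whole impulsive trajectory.) -/
def IsImpulsiveSemiflow {X : Type*} (φb : ℝ≥0 → X → X) (D : Set X)
    (I : X → X) (φ : ℝ≥0 → X → X) : Prop :=
  IsSemiflow φ ∧
  (∀ x, ∀ t : ℝ≥0, (t : ℝ≥0∞) < ImpulsiveTau φb D x → φ t x = φb t x) ∧
  (∀ x, ∀ t : ℝ≥0, (t : ℝ≥0∞) = ImpulsiveTau φb D x → φ t x = I (φb t x))

theorem IsCompact.eventually_mapsTo {T X Y : Type*} [TopologicalSpace T] [TopologicalSpace X]
    [TopologicalSpace Y] {f : T → X → Y} (hf : Continuous fun p : T × X => f p.1 p.2)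
    {K : Set T} (hK : IsCompact K) {U : Set Y} (hU : IsOpen U) {x : X}
    (hx : MapsTo (f · x) K U) : ∀ᶠ z in 𝓝 x, MapsTo (f · z) K U :=
  hK.eventually_forall_of_forall_eventually fun _ ht =>
    (hf.comp continuous_swap).continuousAt.preimage_mem_nhds (hU.mem_nhds (hx ht))

section FirstImpulsiveTime

variable {X : Type*} {φb : ℝ≥0 → X → X} {D : Set X} {x : X}

theorem impulsiveTau_le {t : ℝ≥0} (ht : 0 < t) (htD : φb t x ∈ D) :
    ImpulsiveTau φb D x ≤ t :=
  sInf_le (mem_image_of_mem _ ⟨ht, htD⟩)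

theorem le_impulsiveTau_iff {a : ℝ≥0∞} :
    a ≤ ImpulsiveTau φb D x ↔ ∀ t : ℝ≥0, 0 < t → φb t x ∈ D → a ≤ t := by
  simp only [ImpulsiveTau, le_sInf_iff, forall_mem_image, mem_ofPred_eq, and_imp]

theorem apply_notMem_of_lt_impulsiveTau (h0 : φb 0 x = x) (hx : x ∉ D) {t : ℝ≥0}
    (ht : (t : ℝ≥0∞) < ImpulsiveTau φb D x) : φb t x ∉ D := by
  rcases eq_zero_or_pos t with rfl | ht0
  · rwa [h0]
  · exact fun htD => (impulsiveTau_le ht0 htD).not_gt ht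

theorem coe_le_impulsiveTau_of_mapsTo {A : ℝ≥0} (h : MapsTo (φb · x) (Icc 0 A) Dᶜ) :
    (A : ℝ≥0∞) ≤ ImpulsiveTau φb D x :=
  le_impulsiveTau_iff.2 fun _ _ htD =>
    ENNReal.coe_le_coe.2 (not_le.1 fun htA => h ⟨zero_le, htA⟩ htD).le

end FirstImpulsiveTime

theorem stmt7_general {X : Type*} [MetricSpace X]
    (φb : ℝ≥0 → X → X) (D : Set X)
    (hφb : IsSemiflow φb) (hc : Continuous fun p : ℝ≥0 × X => φb p.1 p.2)
    (hD : IsCompact D) :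
    LowerSemicontinuousOn (ImpulsiveTau φb D) Dᶜ := by
  intro x hx y hy
  obtain ⟨a, hya, hax⟩ := exists_between hy
  lift a to ℝ≥0 using hax.ne_top
  have hxA : MapsTo (φb · x) (Icc 0 a) Dᶜ := fun _ ht =>
    apply_notMem_of_lt_impulsiveTau (hφb.1 x) hx ((ENNReal.coe_le_coe.2 ht.2).trans_lt hax)
  have hnear := isCompact_Icc.eventually_mapsTo hc hD.isClosed.isOpen_compl hxA
  filter_upwards [nhdsWithin_le_nhds hnear] with z hz
  exact hya.trans_le (coe_le_impulsiveTau_of_mapsTo hz)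

/-- The first impulsive time `τ₁` is lower semicontinuous on `X \ D`. -/
theorem stmt7 {X : Type*} [MetricSpace X] [CompactSpace X]
    (φb : ℝ≥0 → X → X) (D : Set X)
    (hφb : IsSemiflow φb) (hc : Continuous fun p : ℝ≥0 × X => φb p.1 p.2)
    (hD : IsCompact D) :
    LowerSemicontinuousOn (ImpulsiveTau φb D) Dᶜ :=
  stmt7_general φb D hφb hc hD
end

section
/- If the image of the impulsive set under the impulsive function is disjoint from the impulsive set, then there exists α > 0 such that τ₁(x) > α for all x ∈ I(D); consequently all impulsive trajectories are defined for all time (T(x) = +∞ for all x). -/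
open Set Filter Topology MeasureTheory Function
open scoped NNReal ENNReal

/-!
Since `I(D)` is compact and disjoint from `D`, joint continuity of the base semiflow and a tube
argument give a uniform time `β > 0` during which no trajectory starting in `I(D)` meets `D`, so
`τ₁ ≥ β` on `I(D)`. The infimum defining `τ₁` is attained because `D` is closed, so after every
impulse the trajectory sits in `I(D)` and each further impulsive time is at least `β`: the sum of
the impulsive times diverges.
-/

section ImpulsiveTau

variable {X : Type*} {φb : ℝ≥0 → X → X} {D : Set X}

lemma le_impulsiveTau_of_forall_lt {β : ℝ≥0} {y : X}
    (h : ∀ t < β, φb t y ∉ D) : (β : ℝ≥0∞) ≤ ImpulsiveTau φb D y := by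
  refine le_sInf ?_
  rintro _ ⟨t, ⟨-, htD⟩, rfl⟩
  exact ENNReal.coe_le_coe.mpr (not_lt.mp fun hlt => h t hlt htD)

variable [TopologicalSpace X]

lemma apply_impulsiveTau_mem_of_ne_top {y : X} (hc : Continuous fun t => φb t y) (hD : IsClosed D)
    (hfin : ImpulsiveTau φb D y ≠ ⊤) : φb (ImpulsiveTau φb D y).toNNReal y ∈ D := by
  set S : Set ℝ≥0 := {t | 0 < t ∧ φb t y ∈ D}
  have hS : S.Nonempty := by
    by_contra hS
    simp [ImpulsiveTau, S, not_nonempty_iff_eq_empty.mp hS] at hfin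
  have htau : (ImpulsiveTau φb D y).toNNReal = sInf S := by
    rw [ImpulsiveTau, sInf_image, ← ENNReal.coe_sInf hS, ENNReal.toNNReal_coe]
  have hclosure : closure S ⊆ {t | φb t y ∈ D} :=
    closure_minimal (fun t ht => ht.2) (hD.preimage hc)
  exact htau ▸ hclosure (csInf_mem_closure hS (OrderBot.bddBelow S))

lemma exists_pos_forall_lt_impulsiveTau {K : Set X} (hK : IsCompact K)
    (hc : Continuous fun p : ℝ≥0 × X => φb p.1 p.2) (hD : IsClosed D)
    (hKD : ∀ y ∈ K, φb 0 y ∉ D) :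
    ∃ α : ℝ≥0∞, 0 < α ∧ ∀ y ∈ K, α < ImpulsiveTau φb D y := by
  have hnear : ∀ᶠ t in 𝓝 (0 : ℝ≥0), ∀ y ∈ K, φb t y ∉ D :=
    hK.eventually_forall_of_forall_eventually fun y hy =>
      (hc.continuousAt (x := (0, y))).eventually (hD.isOpen_compl.mem_nhds (hKD y hy))
  obtain ⟨β, hβ, hβK⟩ := NNReal.nhds_zero_basis.eventually_iff.mp hnear
  have hβ' : (β : ℝ≥0∞) ≠ 0 := by exact_mod_cast hβ.ne'
  refine ⟨β / 2, ENNReal.half_pos hβ', fun y hy => ?_⟩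
  calc (β : ℝ≥0∞) / 2 < β := ENNReal.half_lt_self hβ' ENNReal.coe_ne_top
    _ ≤ ImpulsiveTau φb D y := le_impulsiveTau_of_forall_lt fun t ht => hβK ht y hy

end ImpulsiveTau

lemma tsum_iterate_eq_top {X : Type*} {f : X → X} {g : X → ℝ≥0∞} {K : Set X} {α : ℝ≥0∞}
    (hα : α ≠ 0) (hK : ∀ y ∈ K, α ≤ g y) (hf : ∀ y, g y ≠ ⊤ → f y ∈ K) (x : X) :
    ∑' n, g (f^[n] x) = ⊤ := by
  by_cases htop : ∃ n, g (f^[n] x) = ⊤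
  · obtain ⟨n, hn⟩ := htop
    exact top_le_iff.mp (hn ▸ ENNReal.le_tsum n)
  push Not at htop
  refine top_le_iff.mp ?_
  calc ⊤ = ∑' _ : ℕ, α := (ENNReal.tsum_const_eq_top_of_ne_zero hα).symm
    _ ≤ ∑' n, g (f^[n + 1] x) := ENNReal.tsum_le_tsum fun n =>
        hK _ (iterate_succ_apply' f n x ▸ hf _ (htop n))
    _ ≤ ∑' n, g (f^[n] x) :=
        ENNReal.tsum_comp_le_tsum_of_injective (add_left_injective 1) fun n => g (f^[n] x)

theorem stmt8_general {X : Type*} [MetricSpace X]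
    (φb : ℝ≥0 → X → X) (D : Set X) (I : X → X)
    (hφb : IsSemiflow φb) (hc : Continuous fun p : ℝ≥0 × X => φb p.1 p.2)
    (hD : IsCompact D) (hI : ContinuousOn I D)
    (hdisj : I '' D ∩ D = ∅) :
    (∃ α : ℝ≥0∞, 0 < α ∧ ∀ y ∈ I '' D, α < ImpulsiveTau φb D y) ∧
    ∀ x : X,
      ∑' n : ℕ,
        ImpulsiveTau φb D
          ((fun y => I (φb (ImpulsiveTau φb D y).toNNReal y))^[n] x) = ∞ := by
  have hKD : ∀ y ∈ I '' D, φb 0 y ∉ D := fun y hy hyD => by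
    rw [hφb.1 y] at hyD
    exact (eq_empty_iff_forall_notMem.mp hdisj) y ⟨hy, hyD⟩
  obtain ⟨α, hα, hατ⟩ :=
    exists_pos_forall_lt_impulsiveTau (hD.image_of_continuousOn hI) hc hD.isClosed hKD
  refine ⟨⟨α, hα, hατ⟩, tsum_iterate_eq_top hα.ne' (fun y hy => (hατ y hy).le) fun y hy => ?_⟩
  exact mem_image_of_mem I
    (apply_impulsiveTau_mem_of_ne_top (hc.comp (Continuous.prodMk_left y)) hD.isClosed hy)

/-- If `I(D) ∩ D = ∅`, then there is `α > 0` with `τ₁ > α` on `I(D)`; consequently every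
impulsive trajectory is defined for all time, i.e. `T(x) = sup_n τ_n(x) = ∑ τ₁` along the
successive impulses is infinite for every `x`. -/
theorem stmt8 {X : Type*} [MetricSpace X] [CompactSpace X]
    (φb : ℝ≥0 → X → X) (D : Set X) (I : X → X)
    (hφb : IsSemiflow φb) (hc : Continuous fun p : ℝ≥0 × X => φb p.1 p.2)
    (hD : IsCompact D) (hI : ContinuousOn I D)
    (hpos : ∀ x, 0 < ImpulsiveTau φb D x)
    (hdisj : I '' D ∩ D = ∅) :
    (∃ α : ℝ≥0∞, 0 < α ∧ ∀ y ∈ I '' D, α < ImpulsiveTau φb D y) ∧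
    ∀ x : X,
      ∑' n : ℕ,
        ImpulsiveTau φb D
          ((fun y => I (φb (ImpulsiveTau φb D y).toNNReal y))^[n] x) = ∞ :=
  stmt8_general φb D I hφb hc hD hI hdisj
end

section
/- Let φ be the semiflow of an impulsive dynamical system (X, φ̄, D, I). If I(Ω_φ ∩ D) ⊂ Ω_φ \ D, then Ω_φ \ D is forward invariant under φ, i.e., φ_t(Ω_φ \ D) ⊂ Ω_φ \ D for all t ≥ 0. -/
open Set Filter Topology MeasureTheory Function
open scoped NNReal ENNReal

/-!
Before its first impulsive time a point of `Ω_φ \ D` follows the continuous semiflow `φb`,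
and since the first impulsive time is lower semicontinuous off `D`, the map `φ s` agrees with
the continuous map `φb s` near such a point; a continuous map commuting with the semiflow
preserves non-wandering points. At the impulsive time the base trajectory reaches `Ω_φ ∩ D`,
because `Ω_φ` is closed, and `I` sends it back to `Ω_φ \ D`. The landing points lie in the
compact set `I(Ω_φ ∩ D)`, disjoint from `D`, on which the first impulsive time is bounded below
by some `δ > 0`; so finitely many impulses reach any time `t`.
-/

section ImpulsiveTau

variable {X : Type*} {φb : ℝ≥0 → X → X} {D : Set X} {x : X}

theorem impulsiveTau_le_of_mem {t : ℝ≥0} (ht : 0 < t) (h : φb t x ∈ D) :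
    ImpulsiveTau φb D x ≤ t :=
  sInf_le ⟨t, ⟨ht, h⟩, rfl⟩

theorem notMem_of_lt_impulsiveTau (hφb0 : ∀ x, φb 0 x = x) (hx : x ∉ D) {t : ℝ≥0}
    (ht : (t : ℝ≥0∞) < ImpulsiveTau φb D x) : φb t x ∉ D := by
  rcases eq_zero_or_pos t with rfl | ht0
  · rwa [hφb0]
  · exact fun h => (impulsiveTau_le_of_mem ht0 h).not_gt ht

variable [TopologicalSpace X]

theorem mem_of_impulsiveTau_eq (hc : Continuous fun p : ℝ≥0 × X => φb p.1 p.2)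
    (hD : IsClosed D) {s : ℝ≥0} (hs : ImpulsiveTau φb D x = s) : φb s x ∈ D := by
  unfold ImpulsiveTau at hs
  set S := {t : ℝ≥0 | 0 < t ∧ φb t x ∈ D}
  have hS : S.Nonempty := by
    refine nonempty_iff_ne_empty.2 fun h => ENNReal.coe_ne_top (r := s) ?_
    rw [← hs, h, image_empty, sInf_empty]
  have hs_mem : s ∈ closure S := by
    rw [ENNReal.isEmbedding_coe.closure_eq_preimage_closure_image, mem_preimage, ← hs]
    exact sInf_mem_closure (hS.image _)
  have hclosed : IsClosed {t : ℝ≥0 | φb t x ∈ D} :=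
    hD.preimage (hc.comp (continuous_id.prodMk continuous_const))
  exact closure_minimal (fun t ht => ht.2) hclosed hs_mem

theorem lt_impulsiveTau_of_forall_notMem (hc : Continuous fun p : ℝ≥0 × X => φb p.1 p.2)
    (hD : IsClosed D) {s : ℝ≥0} (h : ∀ u ≤ s, φb u x ∉ D) :
    (s : ℝ≥0∞) < ImpulsiveTau φb D x := by
  by_contra! hle
  obtain ⟨a, ha, has⟩ := ENNReal.le_coe_iff.1 hle
  exact h a has (mem_of_impulsiveTau_eq hc hD ha)

theorem impulsiveTau_pos (hφb0 : ∀ x, φb 0 x = x)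
    (hc : Continuous fun p : ℝ≥0 × X => φb p.1 p.2) (hD : IsClosed D) (hx : x ∉ D) :
    0 < ImpulsiveTau φb D x := by
  simpa using lt_impulsiveTau_of_forall_notMem (s := 0) hc hD fun u hu => by
    rwa [nonpos_iff_eq_zero.1 hu, hφb0]

theorem eventually_lt_impulsiveTau (hφb0 : ∀ x, φb 0 x = x)
    (hc : Continuous fun p : ℝ≥0 × X => φb p.1 p.2) (hD : IsClosed D) (hx : x ∉ D)
    {s : ℝ≥0} (hs : (s : ℝ≥0∞) < ImpulsiveTau φb D x) :
    ∀ᶠ z in 𝓝 x, (s : ℝ≥0∞) < ImpulsiveTau φb D z := by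
  have hP : ∀ u ∈ Icc 0 s, ∀ᶠ p : X × ℝ≥0 in 𝓝 (x, u), φb p.2 p.1 ∉ D := fun u hu =>
    (hc.comp continuous_swap).continuousAt.preimage_mem_nhds (x := (x, u)) <|
      hD.isOpen_compl.mem_nhds <|
      notMem_of_lt_impulsiveTau hφb0 hx ((ENNReal.coe_le_coe.2 hu.2).trans_lt hs)
  filter_upwards [isCompact_Icc.eventually_forall_of_forall_eventually
    (P := fun z u => φb u z ∉ D) hP] with z hz
  exact lt_impulsiveTau_of_forall_notMem hc hD fun u hu => hz u ⟨zero_le, hu⟩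

theorem lowerSemicontinuousAt_impulsiveTau (hφb0 : ∀ x, φb 0 x = x)
    (hc : Continuous fun p : ℝ≥0 × X => φb p.1 p.2) (hD : IsClosed D) (hx : x ∉ D) :
    LowerSemicontinuousAt (ImpulsiveTau φb D) x := by
  intro e he
  obtain ⟨s, hes, hs⟩ := ENNReal.lt_iff_exists_nnreal_btwn.1 he
  filter_upwards [eventually_lt_impulsiveTau hφb0 hc hD hx hs] with z hz using hes.trans hz

theorem exists_pos_le_impulsiveTau (hφb0 : ∀ x, φb 0 x = x)
    (hc : Continuous fun p : ℝ≥0 × X => φb p.1 p.2) (hD : IsClosed D) {K : Set X}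
    (hK : IsCompact K) (hKD : Disjoint K D) :
    ∃ δ : ℝ≥0, 0 < δ ∧ ∀ y ∈ K, (δ : ℝ≥0∞) ≤ ImpulsiveTau φb D y := by
  rcases K.eq_empty_or_nonempty with rfl | hne
  · exact ⟨1, one_pos, by simp⟩
  have hlsc : LowerSemicontinuousOn (ImpulsiveTau φb D) K := fun y hy =>
    (lowerSemicontinuousAt_impulsiveTau hφb0 hc hD
      (hKD.notMem_of_mem_left hy)).lowerSemicontinuousWithinAt K
  obtain ⟨y₀, hy₀, hmin⟩ := hlsc.exists_isMinOn hne hK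
  obtain ⟨δ, hδ, hδy₀⟩ := ENNReal.lt_iff_exists_nnreal_btwn.1
    (impulsiveTau_pos hφb0 hc hD (hKD.notMem_of_mem_left hy₀))
  exact ⟨δ, by exact_mod_cast hδ, fun y hy => hδy₀.le.trans (hmin hy)⟩

end ImpulsiveTau

section Semiflow

variable {X : Type*} {φ : ℝ≥0 → X → X}

theorem IsSemiflow.apply_comm (hφ : IsSemiflow φ) (s t : ℝ≥0) (x : X) :
    φ s (φ t x) = φ t (φ s x) := by
  rw [← hφ.2, ← hφ.2, add_comm]

theorem IsSemiflow.mapsTo_of_stepwise (hφ : IsSemiflow φ) {S : Set X} {τ : X → ℝ≥0∞}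
    {δ : ℝ≥0} (hδ : 0 < δ) (hstep : ∀ y ∈ S, ∀ t : ℝ≥0, (t : ℝ≥0∞) ≤ τ y → φ t y ∈ S)
    (hnext : ∀ y ∈ S, ∀ a : ℝ≥0, (a : ℝ≥0∞) = τ y → (δ : ℝ≥0∞) ≤ τ (φ a y)) (t : ℝ≥0) :
    MapsTo (φ t) S S := by
  -- after the first return time `τ y`, consecutive return times are at least `δ` apart
  have hcover : ∀ n : ℕ, ∀ y ∈ S, ∀ t : ℝ≥0, (t : ℝ≥0∞) ≤ ↑(n * δ) + τ y → φ t y ∈ S := by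
    intro n
    induction n with
    | zero => simpa using hstep
    | succ n ih =>
      intro y hy t ht
      rcases le_or_gt (t : ℝ≥0∞) (τ y) with hle | hlt
      · exact hstep y hy t hle
      obtain ⟨a, ha, hat⟩ := ENNReal.lt_iff_exists_coe.1 hlt
      have hrest : ((t - a : ℝ≥0) : ℝ≥0∞) ≤ ↑(n * δ) + δ := by
        rw [ENNReal.coe_sub, tsub_le_iff_right, ← ha]
        convert ht using 1
        push_cast
        ring
      rw [← tsub_add_cancel_of_le (ENNReal.coe_le_coe.1 hat.le), hφ.2]
      exact ih _ (hstep y hy a ha.ge) _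
        (hrest.trans (add_le_add_right (hnext y hy a ha.symm) _))
  intro x hx
  obtain ⟨n, hn⟩ := exists_nat_ge (t / δ)
  exact hcover n x hx t (le_add_right (by exact_mod_cast (div_le_iff₀ hδ).1 hn))

end Semiflow

section NonWandering

variable {X : Type*} [TopologicalSpace X] {φ : ℝ≥0 → X → X}

theorem isClosed_nonWanderingSet (φ : ℝ≥0 → X → X) : IsClosed (NonWanderingSet φ) := by
  refine isClosed_of_closure_subset fun x hx U hU T hT => ?_
  obtain ⟨y, hyU, hy⟩ :=
    mem_closure_iff.1 hx (interior U) isOpen_interior (mem_interior_iff_mem_nhds.2 hU)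
  obtain ⟨t, hTt, hne⟩ := hy _ (isOpen_interior.mem_nhds hyU) T hT
  exact ⟨t, hTt, hne.mono (inter_subset_inter (preimage_mono interior_subset) interior_subset)⟩

theorem NonWandering.apply_of_commute {f : X → X} {x : X} (hx : NonWandering φ x)
    (hf : ∀ t z, f (φ t z) = φ t (f z)) (hfx : ContinuousAt f x) : NonWandering φ (f x) := by
  intro U hU T hT
  obtain ⟨t, hTt, z, hz, hz'⟩ := hx _ (hfx.preimage_mem_nhds hU) T hT
  exact ⟨t, hTt, f z, mem_preimage.2 (hf t z ▸ hz), hz'⟩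

end NonWandering

section Impulsive

variable {X : Type*} [TopologicalSpace X] {φb : ℝ≥0 → X → X} {D : Set X} {I : X → X}
  {φ : ℝ≥0 → X → X}

theorem IsImpulsiveSemiflow.continuousAt_of_lt (hφ : IsImpulsiveSemiflow φb D I φ)
    (hφb0 : ∀ x, φb 0 x = x) (hc : Continuous fun p : ℝ≥0 × X => φb p.1 p.2)
    (hD : IsClosed D) {y : X} (hy : y ∉ D) {s : ℝ≥0}
    (hs : (s : ℝ≥0∞) < ImpulsiveTau φb D y) : ContinuousAt (φ s) y := by
  have hφbs : Continuous (φb s) := hc.comp (continuous_const.prodMk continuous_id)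
  refine hφbs.continuousAt.congr ?_
  filter_upwards [eventually_lt_impulsiveTau hφb0 hc hD hy hs] with z hz
  exact (hφ.2.1 z s hz).symm

theorem IsImpulsiveSemiflow.mem_nonWanderingSet_diff_of_lt (hφ : IsImpulsiveSemiflow φb D I φ)
    (hφb0 : ∀ x, φb 0 x = x) (hc : Continuous fun p : ℝ≥0 × X => φb p.1 p.2)
    (hD : IsClosed D) {y : X} (hy : y ∈ NonWanderingSet φ \ D) {s : ℝ≥0}
    (hs : (s : ℝ≥0∞) < ImpulsiveTau φb D y) : φ s y ∈ NonWanderingSet φ \ D := by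
  refine ⟨NonWandering.apply_of_commute hy.1 (fun t z => hφ.1.apply_comm s t z)
    (hφ.continuousAt_of_lt hφb0 hc hD hy.2 hs), ?_⟩
  rw [hφ.2.1 y s hs]
  exact notMem_of_lt_impulsiveTau hφb0 hy.2 hs

theorem IsImpulsiveSemiflow.mem_image_of_eq (hφ : IsImpulsiveSemiflow φb D I φ)
    (hφb0 : ∀ x, φb 0 x = x) (hc : Continuous fun p : ℝ≥0 × X => φb p.1 p.2)
    (hD : IsClosed D) {y : X} (hy : y ∈ NonWanderingSet φ \ D) {s : ℝ≥0}
    (hs : ImpulsiveTau φb D y = s) : φ s y ∈ I '' (NonWanderingSet φ ∩ D) := by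
  have hs0 : 0 < s := by exact_mod_cast hs ▸ impulsiveTau_pos hφb0 hc hD hy.2
  have hbefore : ∀ u ∈ Iio s, φb u y ∈ NonWanderingSet φ := fun u hu => by
    have hu' : (u : ℝ≥0∞) < ImpulsiveTau φb D y := hs ▸ ENNReal.coe_lt_coe.2 hu
    rw [← hφ.2.1 y u hu']
    exact (hφ.mem_nonWanderingSet_diff_of_lt hφb0 hc hD hy hu').1
  have : (𝓝[<] s).NeBot := nhdsLT_neBot_of_exists_lt ⟨0, hs0⟩
  have hlim : φb s y ∈ NonWanderingSet φ :=
    (isClosed_nonWanderingSet φ).mem_of_tendsto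
      (((hc.comp (continuous_id.prodMk continuous_const)).tendsto s).mono_left
        nhdsWithin_le_nhds)
      (eventually_nhdsWithin_of_forall hbefore)
  exact ⟨φb s y, ⟨hlim, mem_of_impulsiveTau_eq hc hD hs⟩, (hφ.2.2 y s hs.symm).symm⟩

theorem IsImpulsiveSemiflow.mem_nonWanderingSet_diff_of_le (hφ : IsImpulsiveSemiflow φb D I φ)
    (hφb0 : ∀ x, φb 0 x = x) (hc : Continuous fun p : ℝ≥0 × X => φb p.1 p.2)
    (hD : IsClosed D) (hID : I '' (NonWanderingSet φ ∩ D) ⊆ NonWanderingSet φ \ D)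
    {y : X} (hy : y ∈ NonWanderingSet φ \ D) {s : ℝ≥0}
    (hs : (s : ℝ≥0∞) ≤ ImpulsiveTau φb D y) : φ s y ∈ NonWanderingSet φ \ D := by
  rcases hs.lt_or_eq with hs | hs
  · exact hφ.mem_nonWanderingSet_diff_of_lt hφb0 hc hD hy hs
  · exact hID (hφ.mem_image_of_eq hφb0 hc hD hy hs.symm)

end Impulsive

theorem stmt10_general {X : Type*} [MetricSpace X]
    (φb : ℝ≥0 → X → X) (D : Set X) (I : X → X) (φ : ℝ≥0 → X → X)
    (hφb : IsSemiflow φb) (hc : Continuous fun p : ℝ≥0 × X => φb p.1 p.2)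
    (hD : IsCompact D) (hI : ContinuousOn I D)
    (hφ : IsImpulsiveSemiflow φb D I φ)
    (hID : I '' (NonWanderingSet φ ∩ D) ⊆ NonWanderingSet φ \ D) :
    ∀ t : ℝ≥0, φ t '' (NonWanderingSet φ \ D) ⊆ NonWanderingSet φ \ D := by
  have hK : IsCompact (I '' (NonWanderingSet φ ∩ D)) :=
    (hD.inter_left (isClosed_nonWanderingSet φ)).image_of_continuousOn
      (hI.mono inter_subset_right)
  obtain ⟨δ, hδ, hδK⟩ :=
    exists_pos_le_impulsiveTau hφb.1 hc hD.isClosed hK (disjoint_sdiff_left.mono_left hID)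
  intro t
  refine (hφ.1.mapsTo_of_stepwise (τ := ImpulsiveTau φb D) hδ (fun y hy s hs => ?_) (fun y hy a ha => ?_) t).image_subset
  · exact hφ.mem_nonWanderingSet_diff_of_le hφb.1 hc hD.isClosed hID hy hs
  · exact hδK _ (hφ.mem_image_of_eq hφb.1 hc hD.isClosed hy ha.symm)

/-- If `I(Ω_φ ∩ D) ⊆ Ω_φ \ D`, then `Ω_φ \ D` is forward invariant under the
impulsive semiflow `φ`. -/
theorem stmt10 {X : Type*} [MetricSpace X] [CompactSpace X]
    (φb : ℝ≥0 → X → X) (D : Set X) (I : X → X) (φ : ℝ≥0 → X → X)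
    (hφb : IsSemiflow φb) (hc : Continuous fun p : ℝ≥0 × X => φb p.1 p.2)
    (hD : IsCompact D) (hI : ContinuousOn I D)
    (hpos : ∀ x, 0 < ImpulsiveTau φb D x)
    (hφ : IsImpulsiveSemiflow φb D I φ)
    (hID : I '' (NonWanderingSet φ ∩ D) ⊆ NonWanderingSet φ \ D) :
    ∀ t : ℝ≥0, φ t '' (NonWanderingSet φ \ D) ⊆ NonWanderingSet φ \ D :=
  stmt10_general φb D I φ hφb hc hD hI hφ hID
end

section
/- For an impulsive dynamical system (X, φ̄, D, I) with I(Ω_φ ∩ D) ⊂ Ω_φ \ D, the restriction of the quotient projection π to Ω_φ \ D is a continuous bijection onto π(Ω_φ), and the image of any Borel subset of Ω_φ \ D under π is a Borel subset of π(Ω_φ). -/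
open Set Filter Topology MeasureTheory Function
open scoped NNReal ENNReal

/-- The relation determined by the impulsive map: `x ∼ y` iff `x = y`, `y = I x`,
`x = I y`, or `I x = I y` (with `I` only acting on points of `D`). -/
def ImpulseRel {X : Type*} (D : Set X) (I : X → X) (x y : X) : Prop :=
  x = y ∨ (x ∈ D ∧ y = I x) ∨ (y ∈ D ∧ x = I y) ∨ (x ∈ D ∧ y ∈ D ∧ I x = I y)

/-!
Two points are identified by `π` iff finitely many jumps `z ↦ I z` from points `z ∈ D` take
both of them to a common point. Points outside `D` cannot jump, so `π` is injective on `Dᶜ`,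
and for `B ⊆ Dᶜ` the preimage of `π(B)` is the set of points reaching `B`.

The quotient need not be Hausdorff, so instead of Lusin–Suslin we argue directly: the sets `A`
with `π(A \ D)` Borel form a σ-algebra (`π` is injective on `Dᶜ`, and `π(Dᶜ)` is open since its
preimage is the complement of the closed set `T` of points whose `I`-orbit stays in `D`
forever). It contains the open sets: an open subset of `Dᶜ` is a countable union of closed sets
`F`, and `π(F)` is the difference of the closed sets `π(F) ∪ π(T)` and `π(T)`, because
`π⁻¹(π(F)) ∪ T` is closed.
-/

namespace ImpulseRel

open Relation

variable {X : Type*} {D : Set X} {g : X → X}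

variable (D g) in
def Step (x y : X) : Prop := x ∈ D ∧ y = g x

variable (D g) in
abbrev proj : X → Quotient (EqvGen.setoid (ImpulseRel D g)) := Quotient.mk _

variable (D g) in
def stayingSet (n : ℕ) : Set X := {x | ∀ j < n, g^[j] x ∈ D}

variable (D g) in
def reachSet (B : Set X) : Set X := ⋃ n, stayingSet D g n ∩ g^[n] ⁻¹' B

variable (D g) in
def trappedSet : Set X := {x | ∀ n, g^[n] x ∈ D}

theorem stayingSet_antitone : Antitone (stayingSet D g) :=
  fun _ _ hmn _ hx j hj => hx j (hj.trans_le hmn)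

theorem stayingSet_succ (n : ℕ) : stayingSet D g (n + 1) = stayingSet D g n ∩ g^[n] ⁻¹' D := by
  ext x
  simp only [stayingSet, mem_ofPred_eq, mem_inter_iff, mem_preimage, Nat.forall_lt_succ_right]

theorem eq_zero_of_mem_stayingSet {x : X} {n : ℕ} (hx : x ∉ D) (h : x ∈ stayingSet D g n) :
    n = 0 :=
  Nat.eq_zero_of_not_pos fun hn => hx (h 0 hn)

theorem reflTransGen_step_iff {x y : X} :
    ReflTransGen (Step D g) x y ↔ ∃ n, x ∈ stayingSet D g n ∧ g^[n] x = y := by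
  constructor
  · intro h
    induction h using ReflTransGen.head_induction_on with
    | refl => exact ⟨0, nofun, rfl⟩
    | head hstep _ ih =>
      obtain ⟨n, hn, rfl⟩ := ih
      obtain ⟨hx, rfl⟩ := hstep
      refine ⟨n + 1, fun j hj => ?_, rfl⟩
      cases j with
      | zero => exact hx
      | succ k => exact hn k (Nat.lt_of_succ_lt_succ hj)
  · rintro ⟨n, hn, rfl⟩
    induction n generalizing x with
    | zero => exact .refl
    | succ n ih =>
      exact .head ⟨hn 0 n.succ_pos, rfl⟩ (ih fun j hj => hn (j + 1) (Nat.succ_lt_succ hj))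

theorem equivalence_join_reflTransGen_step : Equivalence (Join (ReflTransGen (Step D g))) :=
  equivalence_join_reflTransGen fun _ _ _ hb hc => by
    obtain rfl := hb.2.trans hc.2.symm
    exact ⟨_, .refl, .refl⟩

theorem le_join_reflTransGen_step : ImpulseRel D g ≤ Join (ReflTransGen (Step D g)) := by
  rintro x y (rfl | ⟨hx, rfl⟩ | ⟨hy, rfl⟩ | ⟨hx, hy, hxy⟩)
  · exact ⟨x, .refl, .refl⟩
  · exact ⟨g x, .single ⟨hx, rfl⟩, .refl⟩
  · exact ⟨g y, .refl, .single ⟨hy, rfl⟩⟩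
  · exact ⟨g x, .single ⟨hx, rfl⟩, .single ⟨hy, hxy⟩⟩

theorem step_le_eqvGen : Step D g ≤ EqvGen (ImpulseRel D g) :=
  fun _ _ h => EqvGen.rel _ _ (.inr (.inl h))

theorem eqvGen_iff_join {x y : X} :
    EqvGen (ImpulseRel D g) x y ↔ Join (ReflTransGen (Step D g)) x y :=
  ⟨fun h => equivalence_join_reflTransGen_step.eqvGen_iff.mp (h.mono le_join_reflTransGen_step),
    join_le_of_equivalence_of_le (EqvGen.is_equivalence _)
      (reflTransGen_le_of_equivalence_of_le (EqvGen.is_equivalence _) step_le_eqvGen) x y⟩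

theorem proj_eq_proj_iff {x y : X} :
    proj D g x = proj D g y ↔
      ∃ m n, x ∈ stayingSet D g m ∧ y ∈ stayingSet D g n ∧ g^[m] x = g^[n] y := by
  rw [proj, Quotient.eq]
  change EqvGen _ x y ↔ _
  simp only [eqvGen_iff_join, Join, reflTransGen_step_iff]
  constructor
  · rintro ⟨_, ⟨m, hm, rfl⟩, n, hn, hmn⟩
    exact ⟨m, n, hm, hn, hmn.symm⟩
  · rintro ⟨m, n, hm, hn, hmn⟩
    exact ⟨_, ⟨m, hm, rfl⟩, n, hn, hmn.symm⟩

theorem injOn_proj_compl : InjOn (proj D g) Dᶜ := by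
  intro x hx y hy hxy
  obtain ⟨m, n, hm, hn, hmn⟩ := proj_eq_proj_iff.mp hxy
  obtain rfl := eq_zero_of_mem_stayingSet hx hm
  obtain rfl := eq_zero_of_mem_stayingSet hy hn
  exact hmn

theorem proj_image_sdiff_eq {S : Set X} (hS : g '' (S ∩ D) ⊆ S \ D) :
    proj D g '' (S \ D) = proj D g '' S := by
  refine (image_mono sdiff_subset).antisymm ?_
  rintro _ ⟨x, hx, rfl⟩
  by_cases hxD : x ∈ D
  · exact ⟨g x, hS ⟨x, ⟨hx, hxD⟩, rfl⟩, (Quotient.sound (step_le_eqvGen _ _ ⟨hxD, rfl⟩)).symm⟩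
  · exact ⟨x, ⟨hx, hxD⟩, rfl⟩

theorem reachSet_compl : reachSet D g Dᶜ = (trappedSet D g)ᶜ := by
  classical
  ext x
  simp only [reachSet, trappedSet, mem_iUnion, mem_inter_iff, mem_preimage, mem_compl_iff,
    mem_ofPred_eq, not_forall]
  constructor
  · rintro ⟨n, -, hn⟩
    exact ⟨n, hn⟩
  · intro h
    exact ⟨Nat.find h, fun j hj => not_not.mp (Nat.find_min h hj), Nat.find_spec h⟩

theorem preimage_proj_image_of_subset_compl {B : Set X} (hB : B ⊆ Dᶜ) :
    proj D g ⁻¹' (proj D g '' B) = reachSet D g B := by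
  ext x
  simp only [mem_preimage, mem_image, reachSet, mem_iUnion, mem_inter_iff]
  constructor
  · rintro ⟨b, hb, hbx⟩
    obtain ⟨n, m, hn, hm, hnm⟩ := proj_eq_proj_iff.mp hbx
    obtain rfl := eq_zero_of_mem_stayingSet (hB hb) hn
    exact ⟨m, hm, hnm ▸ hb⟩
  · rintro ⟨m, hm, hmB⟩
    exact ⟨_, hmB, proj_eq_proj_iff.mpr ⟨0, m, nofun, hm, rfl⟩⟩

theorem preimage_proj_image_trappedSet :
    proj D g ⁻¹' (proj D g '' trappedSet D g) = trappedSet D g := by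
  refine (subset_preimage_image _ _).antisymm' ?_
  rintro x ⟨t, ht, htx⟩ j
  obtain ⟨n, m, -, hm, hnm⟩ := proj_eq_proj_iff.mp htx
  rcases lt_or_ge j m with hj | hj
  · exact hm j hj
  · obtain ⟨k, rfl⟩ := Nat.exists_eq_add_of_le' hj
    rw [iterate_add_apply, ← hnm, ← iterate_add_apply]
    exact ht _

theorem disjoint_proj_image_trappedSet {B : Set X} (hB : B ⊆ Dᶜ) :
    Disjoint (proj D g '' B) (proj D g '' trappedSet D g) := by
  rw [disjoint_left]
  rintro _ ⟨x, hx, rfl⟩ hxT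
  exact hB hx (preimage_proj_image_trappedSet.subset hxT 0)

theorem reachSet_union_trappedSet_eq (F : Set X) :
    reachSet D g F ∪ trappedSet D g =
      ⋂ N, (⋃ n < N, stayingSet D g n ∩ g^[n] ⁻¹' F) ∪ stayingSet D g N := by
  ext x
  simp only [mem_union, mem_iInter, mem_iUnion, reachSet]
  constructor
  · rintro (⟨n, hn⟩ | hT) N
    · rcases lt_or_ge n N with h | h
      · exact .inl ⟨n, h, hn⟩
      · exact .inr (stayingSet_antitone h hn.1)
    · exact .inr fun j _ => hT j
  · intro h
    refine or_iff_not_imp_right.mpr fun hT => ?_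
    obtain ⟨j, hj⟩ := not_forall.mp hT
    rcases h (j + 1) with ⟨n, -, hn⟩ | h
    · exact ⟨n, hn⟩
    · exact absurd (h j j.lt_succ_self) hj

section Topology

variable [TopologicalSpace X]

theorem isQuotientMap_proj : IsQuotientMap (proj D g) :=
  isQuotientMap_quotient_mk'

theorem isClosed_stayingSet_and_continuousOn_iterate (hD : IsClosed D) (hg : ContinuousOn g D)
    (n : ℕ) : IsClosed (stayingSet D g n) ∧ ContinuousOn g^[n] (stayingSet D g n) := by
  induction n with
  | zero => exact ⟨by simp [stayingSet], continuousOn_id⟩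
  | succ n ih =>
    rw [stayingSet_succ, iterate_succ']
    exact ⟨ih.2.preimage_isClosed_of_isClosed ih.1 hD,
      hg.comp (ih.2.mono inter_subset_left) fun _ hx => hx.2⟩

theorem isClosed_stayingSet (hD : IsClosed D) (hg : ContinuousOn g D) (n : ℕ) :
    IsClosed (stayingSet D g n) :=
  (isClosed_stayingSet_and_continuousOn_iterate hD hg n).1

theorem isClosed_stayingSet_inter_preimage (hD : IsClosed D) (hg : ContinuousOn g D)
    {F : Set X} (hF : IsClosed F) (n : ℕ) : IsClosed (stayingSet D g n ∩ g^[n] ⁻¹' F) :=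
  have h := isClosed_stayingSet_and_continuousOn_iterate hD hg n
  h.2.preimage_isClosed_of_isClosed h.1 hF

theorem isClosed_trappedSet (hD : IsClosed D) (hg : ContinuousOn g D) :
    IsClosed (trappedSet D g) := by
  have : trappedSet D g = ⋂ n, stayingSet D g n :=
    ext fun x => ⟨fun h => mem_iInter.mpr fun _ j _ => h j,
      fun h j => mem_iInter.mp h (j + 1) j j.lt_succ_self⟩
  rw [this]
  exact isClosed_iInter (isClosed_stayingSet hD hg)

theorem isClosed_reachSet_union_trappedSet (hD : IsClosed D) (hg : ContinuousOn g D)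
    {F : Set X} (hF : IsClosed F) : IsClosed (reachSet D g F ∪ trappedSet D g) := by
  rw [reachSet_union_trappedSet_eq]
  exact isClosed_iInter fun N => ((finite_lt_nat N).isClosed_biUnion fun n _ =>
    isClosed_stayingSet_inter_preimage hD hg hF n).union (isClosed_stayingSet hD hg N)

theorem isOpen_proj_image_compl (hD : IsClosed D) (hg : ContinuousOn g D) :
    IsOpen (proj D g '' Dᶜ) := by
  rw [← isQuotientMap_proj.isOpen_preimage, preimage_proj_image_of_subset_compl subset_rfl,
    reachSet_compl]
  exact (isClosed_trappedSet hD hg).isOpen_compl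

theorem isClosed_proj_image_trappedSet (hD : IsClosed D) (hg : ContinuousOn g D) :
    IsClosed (proj D g '' trappedSet D g) := by
  rw [← isQuotientMap_proj.isClosed_preimage, preimage_proj_image_trappedSet]
  exact isClosed_trappedSet hD hg

theorem measurableSet_proj_image_of_isClosed (hD : IsClosed D) (hg : ContinuousOn g D)
    {F : Set X} (hF : IsClosed F) (hFD : F ⊆ Dᶜ) : MeasurableSet[borel _] (proj D g '' F) := by
  have hK : IsClosed (proj D g '' F ∪ proj D g '' trappedSet D g) := by
    rw [← isQuotientMap_proj.isClosed_preimage, preimage_union,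
      preimage_proj_image_of_subset_compl hFD, preimage_proj_image_trappedSet]
    exact isClosed_reachSet_union_trappedSet hD hg hF
  borelize (Quotient (EqvGen.setoid (ImpulseRel D g)))
  rw [← union_sdiff_cancel_right (disjoint_proj_image_trappedSet hFD).inter_eq.subset]
  exact hK.measurableSet.diff (isClosed_proj_image_trappedSet hD hg).measurableSet

end Topology

theorem measurableSet_proj_image_inter_compl {X : Type*} [PseudoEMetricSpace X]
    [MeasurableSpace X] [BorelSpace X] {D : Set X} {g : X → X} (hD : IsClosed D)
    (hg : ContinuousOn g D) {A : Set X} (hA : MeasurableSet A) :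
    MeasurableSet[borel _] (proj D g '' (A ∩ Dᶜ)) := by
  borelize (Quotient (EqvGen.setoid (ImpulseRel D g)))
  induction A, hA using MeasurableSet.induction_on_open with
  | isOpen U hU =>
    obtain ⟨F, hFc, hFU, hF, -⟩ := (hU.inter hD.isOpen_compl).exists_iUnion_isClosed
    rw [← hF, image_iUnion]
    exact .iUnion fun n =>
      measurableSet_proj_image_of_isClosed hD hg (hFc n) ((hFU n).trans inter_subset_right)
  | compl t _ ht =>
    rw [← sdiff_eq_compl_inter, ← sdiff_inter_self_eq_sdiff,
      injOn_proj_compl.image_sdiff_subset inter_subset_right]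
    exact (isOpen_proj_image_compl hD hg).measurableSet.diff ht
  | iUnion f _ _ hf =>
    rw [iUnion_inter, image_iUnion]
    exact .iUnion hf

end ImpulseRel

theorem stmt14_general {X : Type*} [MetricSpace X]
    [MeasurableSpace X] [BorelSpace X]
    (D : Set X) (I : X → X) (φ : ℝ≥0 → X → X)
    (hD : IsCompact D) (hI : ContinuousOn I D)
    (hID : I '' (NonWanderingSet φ ∩ D) ⊆ NonWanderingSet φ \ D) :
    ContinuousOn (Quotient.mk (Relation.EqvGen.setoid (ImpulseRel D I)))
        (NonWanderingSet φ \ D) ∧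
    InjOn (Quotient.mk (Relation.EqvGen.setoid (ImpulseRel D I))) (NonWanderingSet φ \ D) ∧
    Quotient.mk (Relation.EqvGen.setoid (ImpulseRel D I)) '' (NonWanderingSet φ \ D) =
      Quotient.mk (Relation.EqvGen.setoid (ImpulseRel D I)) '' NonWanderingSet φ ∧
    ∀ A : Set X, A ⊆ NonWanderingSet φ \ D → MeasurableSet A →
      MeasurableSet[borel (Quotient (Relation.EqvGen.setoid (ImpulseRel D I)))]
        (Quotient.mk (Relation.EqvGen.setoid (ImpulseRel D I)) '' A) := by
  refine ⟨continuous_quotient_mk'.continuousOn,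
    ImpulseRel.injOn_proj_compl.mono (sdiff_subset_compl _ _),
    ImpulseRel.proj_image_sdiff_eq hID, fun A hA hAm => ?_⟩
  have h := ImpulseRel.measurableSet_proj_image_inter_compl hD.isClosed hI hAm
  rwa [inter_eq_left.mpr (hA.trans (sdiff_subset_compl _ _))] at h

/-- Under `I(Ω_φ ∩ D) ⊆ Ω_φ \ D`, the quotient projection `π` restricted to `Ω_φ \ D`
is a continuous injection with `π(Ω_φ \ D) = π(Ω_φ)`, and the image under `π` of any
Borel subset of `Ω_φ \ D` is a Borel subset of the quotient. -/
theorem stmt14 {X : Type*} [MetricSpace X] [CompactSpace X]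
    [MeasurableSpace X] [BorelSpace X]
    (φb : ℝ≥0 → X → X) (D : Set X) (I : X → X) (φ : ℝ≥0 → X → X)
    (hφb : IsSemiflow φb) (hc : Continuous fun p : ℝ≥0 × X => φb p.1 p.2)
    (hD : IsCompact D) (hI : ContinuousOn I D)
    (hpos : ∀ x, 0 < ImpulsiveTau φb D x)
    (hφ : IsImpulsiveSemiflow φb D I φ)
    (hID : I '' (NonWanderingSet φ ∩ D) ⊆ NonWanderingSet φ \ D) :
    ContinuousOn (Quotient.mk (Relation.EqvGen.setoid (ImpulseRel D I)))
        (NonWanderingSet φ \ D) ∧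
    InjOn (Quotient.mk (Relation.EqvGen.setoid (ImpulseRel D I))) (NonWanderingSet φ \ D) ∧
    Quotient.mk (Relation.EqvGen.setoid (ImpulseRel D I)) '' (NonWanderingSet φ \ D) =
      Quotient.mk (Relation.EqvGen.setoid (ImpulseRel D I)) '' NonWanderingSet φ ∧
    ∀ A : Set X, A ⊆ NonWanderingSet φ \ D → MeasurableSet A →
      MeasurableSet[borel (Quotient (Relation.EqvGen.setoid (ImpulseRel D I)))]
        (Quotient.mk (Relation.EqvGen.setoid (ImpulseRel D I)) '' A) :=
  stmt14_general D I φ hD hI hID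
end
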